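/- arXiv:2208.12773 — 3 statements merged into one kernel-verified Lean document; each statement's English description precedes it below -/
import Mathlib

section
/- Let Δ_{w,a} be the Laplacian of a finite directed graph with strictly positive weights w and drift a, t > 0, T_t = e^{−tΔ_{w,a}/2}, and S_t = (I − e^{−tΔ_{w,a}})^{1/2}. Then for every f ∈ ℓ²(V), ‖S_t |f|‖ ≤ ‖S_t f‖, where |f|(i) = |f(i)|. -/
/-!
The off-diagonal entries of `Δ = D_aᵀ M_w D_a` are nonpositive, so `-tΔ + c` is entrywise
nonnegative for large `c`, and then so is `e^{-tΔ} = e^{-c} e^{-tΔ + c}`. Hence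
`⟨f, e^{-tΔ} f⟩ ≤ ⟨|f|, e^{-tΔ} |f|⟩`, and since `‖S g‖² = ‖g‖² - ⟨g, e^{-tΔ} g⟩` for the symmetric
square root `S` and `‖|f|‖ = ‖f‖`, the inequality follows.
-/

open Matrix Real MeasureTheory ProbabilityTheory

variable {V : Type*} [Fintype V] [DecidableEq V]

/-- The difference operator `(D_a f)(i,j) = f j - e^{a(i,j)} f i`, as a matrix from
`ℓ²(V)` to `ℓ²(E)`. -/
noncomputable def Dmat (E : Finset (V × V)) (a : V × V → ℝ) : Matrix E V ℝ :=
  fun e v => (if v = (e : V × V).2 then (1 : ℝ) else 0) -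
    Real.exp (a e) * (if v = (e : V × V).1 then (1 : ℝ) else 0)

/-- The Laplacian `Δ_{w,a} = D_a^* M_w D_a` associated with the quadratic form
`Q_{w,a}(f) = Σ_{(i,j)∈E} w(i,j) |e^{a(i,j)} f i − f j|²`. -/
noncomputable def Lap (E : Finset (V × V)) (w a : V × V → ℝ) : Matrix V V ℝ :=
  (Dmat E a)ᵀ * Matrix.diagonal (fun e : E => w e) * Dmat E a

/-- Weak connectivity of a directed graph: any two vertices are joined by a chain of
edges ignoring orientation. -/
def WeaklyConnected (E : Finset (V × V)) : Prop :=
  ∀ u v : V, Relation.ReflTransGen (fun x y => (x, y) ∈ E ∨ (y, x) ∈ E) u v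

namespace Matrix

variable {n : Type*} [Fintype n]

section Exp

variable [DecidableEq n]

attribute [local instance] Matrix.linftyOpNormedRing Matrix.linftyOpNormedAlgebra

lemma exp_apply_nonneg_of_apply_nonneg {B : Matrix n n ℝ} (hB : ∀ i j, 0 ≤ B i j) (i j : n) :
    0 ≤ NormedSpace.exp B i j := by
  have hsum := NormedSpace.exp_series_hasSum_exp' (𝕂 := ℝ) B
  refine HasSum.nonneg (fun k => ?_) (Pi.hasSum.mp (Pi.hasSum.mp hsum i) j)
  exact mul_nonneg (by positivity) (pow_apply_nonneg hB k i j)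

lemma exp_apply_nonneg_of_offDiag_nonneg {A : Matrix n n ℝ}
    (hA : ∀ i j, i ≠ j → 0 ≤ A i j) (i j : n) : 0 ≤ NormedSpace.exp A i j := by
  set c : ℝ := ∑ k, |A k k|
  have hshift : ∀ i j, 0 ≤ (A + algebraMap ℝ _ c) i j := by
    intro i j
    rcases eq_or_ne i j with rfl | hij
    · have : |A i i| ≤ c :=
        Finset.single_le_sum (fun k _ => abs_nonneg (A k k)) (Finset.mem_univ i)
      simp only [add_apply, algebraMap_matrix_apply, if_true, Algebra.algebraMap_self,
        RingHom.id_apply]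
      linarith [neg_abs_le (A i i)]
    · simpa [algebraMap_matrix_apply, hij] using hA i j hij
  have hexp : NormedSpace.exp A = Real.exp (-c) • NormedSpace.exp (A + algebraMap ℝ _ c) := by
    have hcomm : Commute (algebraMap ℝ (Matrix n n ℝ) (-c)) (A + algebraMap ℝ _ c) :=
      Algebra.commute_algebraMap_left _ _
    calc NormedSpace.exp A
        = NormedSpace.exp (algebraMap ℝ _ (-c) + (A + algebraMap ℝ _ c)) := by
          rw [map_neg, add_comm A, neg_add_cancel_left]
      _ = NormedSpace.exp (algebraMap ℝ _ (-c)) * NormedSpace.exp (A + algebraMap ℝ _ c) :=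
          exp_add_of_commute _ _ hcomm
      _ = Real.exp (-c) • NormedSpace.exp (A + algebraMap ℝ _ c) := by
          rw [Algebra.smul_def, Real.exp_eq_exp_ℝ]
          congr 1
          exact (NormedSpace.algebraMap_exp_comm _).symm
  rw [hexp, smul_apply, smul_eq_mul]
  exact mul_nonneg (Real.exp_pos _).le (exp_apply_nonneg_of_apply_nonneg hshift i j)

end Exp

lemma dotProduct_mulVec_le_abs {M : Matrix n n ℝ} (hM : ∀ i j, 0 ≤ M i j) (f : n → ℝ) :
    f ⬝ᵥ M *ᵥ f ≤ |f| ⬝ᵥ M *ᵥ |f| := by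
  simp only [dotProduct, mulVec, Finset.mul_sum]
  refine Finset.sum_le_sum fun i _ => Finset.sum_le_sum fun j _ => ?_
  calc f i * (M i j * f j) ≤ |f i * (M i j * f j)| := le_abs_self _
    _ = |f| i * (M i j * |f| j) := by simp [abs_mul, abs_of_nonneg (hM i j)]

lemma IsSymm.sum_mulVec_sq {S : Matrix n n ℝ} (hS : S.IsSymm) (g : n → ℝ) :
    ∑ i, (S *ᵥ g) i ^ 2 = g ⬝ᵥ (S * S) *ᵥ g := by
  rw [← mulVec_mulVec, dotProduct_mulVec, ← hS.eq, vecMul_transpose, hS.eq]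
  simp [dotProduct, sq]

end Matrix

omit [Fintype V] in
lemma Lap_apply_nonpos_of_ne (E : Finset (V × V)) {w : V × V → ℝ} (a : V × V → ℝ)
    (hw : ∀ e ∈ E, 0 ≤ w e) {i j : V} (hij : i ≠ j) : Lap E w a i j ≤ 0 := by
  rw [Lap, Matrix.mul_assoc, Matrix.mul_apply]
  refine Finset.sum_nonpos fun e _ => ?_
  rw [Matrix.diagonal_mul, Matrix.transpose_apply, mul_left_comm]
  refine mul_nonpos_of_nonneg_of_nonpos (hw e e.2) ?_
  have := Real.exp_pos (a e)
  -- for `i ≠ j` only the cross terms `-e^{a e}` of an edge joining `i` and `j` survive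
  simp only [Dmat]
  split_ifs <;> subst_vars <;> simp_all <;> positivity

lemma exp_neg_smul_Lap_apply_nonneg (E : Finset (V × V)) {w : V × V → ℝ} (a : V × V → ℝ)
    (hw : ∀ e ∈ E, 0 ≤ w e) {t : ℝ} (ht : 0 ≤ t) (i j : V) :
    0 ≤ NormedSpace.exp ((-t) • Lap E w a) i j :=
  Matrix.exp_apply_nonneg_of_offDiag_nonneg (fun i j hij => by
    simpa [neg_mul] using mul_nonneg ht (neg_nonneg.mpr (Lap_apply_nonpos_of_ne E a hw hij))) i j

/-- Beurling–Deny type inequality `‖S_t |f|‖ ≤ ‖S_t f‖` for the high-pass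
filter `S_t = (I - e^{-tΔ_{w,a}})^{1/2}`. -/
theorem stmt_6 (E : Finset (V × V)) (w a : V × V → ℝ)
    (hw : ∀ e ∈ E, 0 < w e) (t : ℝ) (ht : 0 < t)
    (S : Matrix V V ℝ) (hS : S.PosSemidef)
    (hSsq : S * S = 1 - NormedSpace.exp ((-t) • Lap E w a)) (f : V → ℝ) :
    ∑ i, (S.mulVec (fun j => |f j|) i) ^ 2 ≤ ∑ i, (S.mulVec f i) ^ 2 := by
  have hSymm : S.IsSymm := Matrix.isHermitian_iff_isSymm.mp hS.1
  have hnorm : |f| ⬝ᵥ |f| = f ⬝ᵥ f := by simp [dotProduct]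
  have hcross := Matrix.dotProduct_mulVec_le_abs
    (exp_neg_smul_Lap_apply_nonneg E a (fun e he => (hw e he).le) ht.le) f
  change ∑ i, (S *ᵥ |f|) i ^ 2 ≤ _
  rw [hSymm.sum_mulVec_sq, hSymm.sum_mulVec_sq, hSsq, Matrix.sub_mulVec, Matrix.sub_mulVec,
    Matrix.one_mulVec, Matrix.one_mulVec, dotProduct_sub, dotProduct_sub, hnorm]
  linarith
end

section
/- Let (V,E) be a finite weakly connected directed graph, Δ_{w,a} the associated Laplacian with largest eigenvalue λ_max, t > 0, T_t = e^{−tΔ_{w,a}/2}, S_t = (I − e^{−tΔ_{w,a}})^{1/2}. Given f ∈ ℓ²(V), define the scattering sequence g_0 = f and g_{k+1} = S_t |g_k| for k ≥ 0. Then for every k ∈ ℕ, k ≥ 1: ‖g_k‖ ≤ (1 − e^{−t λ_max})^{(k−1)/2} ‖S_t |g_0|‖ ≤ (1 − e^{−t λ_max})^{k/2} ‖f‖. -/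
/-!
In an eigenbasis of the symmetric matrix `Δ`, the quadratic form of `S² = 1 - e^{-tΔ}` is at
most `(1 - e^{-tλ_max}) ‖x‖²`, so `S` shrinks `ℓ²` norms by the factor `√(1 - e^{-tλ_max})`.
Taking entrywise absolute values preserves the norm, so `‖g_{k+1}‖ = ‖S |g_k|‖` is at most that
factor times `‖g_k‖`, and the bounds follow by iteration.
-/

open Matrix Real MeasureTheory ProbabilityTheory

variable {V : Type*} [Fintype V] [DecidableEq V]

omit [Fintype V] in
theorem Lap_isHermitian (E : Finset (V × V)) (w a : V × V → ℝ) : (Lap E w a).IsHermitian := by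
  rw [IsHermitian, conjTranspose_eq_transpose_of_trivial, Lap, transpose_mul, transpose_mul,
    transpose_transpose, diagonal_transpose, Matrix.mul_assoc]

namespace Matrix.IsHermitian

variable {n : Type*} [Fintype n] [DecidableEq n] {L : Matrix n n ℝ} (hL : L.IsHermitian)

theorem exp_smul_eq_conj_diagonal (s : ℝ) :
    NormedSpace.exp (s • L) = (hL.eigenvectorUnitary : Matrix n n ℝ) *
      diagonal (fun i => Real.exp (s * hL.eigenvalues i)) *
        star (hL.eigenvectorUnitary : Matrix n n ℝ) := by
  set U : Matrix n n ℝ := (hL.eigenvectorUnitary : Matrix n n ℝ)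
  have hUinv : U⁻¹ = star U := inv_eq_left_inv (Unitary.coe_star_mul_self _)
  have hconj : s • L = U * diagonal (fun i => s * hL.eigenvalues i) * U⁻¹ := by
    conv_lhs => rw [hL.spectral_theorem]
    rw [hUinv, Unitary.conjStarAlgAut_apply, ← smul_mul_assoc, ← mul_smul_comm, ← diagonal_smul]
    rfl
  rw [hconj, exp_conj U _ Unitary.isUnit_coe, exp_diagonal, hUinv, Pi.exp_def,
    ← Real.exp_eq_exp_ℝ]

theorem eigenvalues_le {m : ℝ}
    (hm : m ∈ upperBounds {μ : ℝ | ∃ f : n → ℝ, f ≠ 0 ∧ L *ᵥ f = μ • f}) (i : n) :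
    hL.eigenvalues i ≤ m :=
  hm ⟨_, fun h => hL.eigenvectorBasis.orthonormal.ne_zero i (PiLp.ext (congrFun h)),
    hL.mulVec_eigenvectorBasis i⟩

theorem posSemidef_exp_neg_smul_sub {t m : ℝ} (ht : 0 ≤ t) (hm : ∀ i, hL.eigenvalues i ≤ m) :
    (NormedSpace.exp ((-t) • L) - Real.exp (-(t * m)) • 1).PosSemidef := by
  set U : Matrix n n ℝ := (hL.eigenvectorUnitary : Matrix n n ℝ)
  have hone : Real.exp (-(t * m)) • (1 : Matrix n n ℝ) =
      U * diagonal (fun _ => Real.exp (-(t * m))) * star U := by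
    rw [← smul_one_eq_diagonal, mul_smul_comm, mul_one, smul_mul_assoc,
      Unitary.mul_star_self_of_mem hL.eigenvectorUnitary.2]
  rw [hL.exp_smul_eq_conj_diagonal, hone, ← sub_mul, ← mul_sub, diagonal_sub,
    Unitary.isUnit_coe.posSemidef_star_right_conjugate_iff]
  refine PosSemidef.diagonal fun i => sub_nonneg.mpr (Real.exp_le_exp.mpr ?_)
  nlinarith [hm i]

theorem dotProduct_one_sub_exp_neg_smul_mulVec_le {t m : ℝ} (ht : 0 ≤ t)
    (hm : ∀ i, hL.eigenvalues i ≤ m) (x : n → ℝ) :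
    x ⬝ᵥ (1 - NormedSpace.exp ((-t) • L)) *ᵥ x ≤ (1 - Real.exp (-(t * m))) * (x ⬝ᵥ x) := by
  have h := (hL.posSemidef_exp_neg_smul_sub ht hm).dotProduct_mulVec_nonneg x
  rw [star_trivial, sub_mulVec, smul_mulVec, one_mulVec, dotProduct_sub, dotProduct_smul,
    smul_eq_mul] at h
  rw [sub_mulVec, one_mulVec, dotProduct_sub]
  linarith

omit [DecidableEq n] in
theorem sum_sq_mulVec {S : Matrix n n ℝ} (hS : S.IsHermitian) (x : n → ℝ) :
    ∑ i, (S *ᵥ x) i ^ 2 = x ⬝ᵥ (S * S) *ᵥ x := by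
  have hST : Sᵀ = S := hS
  rw [← mulVec_mulVec, dotProduct_mulVec, ← hST, vecMul_transpose, hST]
  simp only [dotProduct, sq]

end Matrix.IsHermitian

theorem sum_sq_mulVec_le_of_sq_eq_one_sub_exp {n : Type*} [Fintype n] [DecidableEq n]
    {L S : Matrix n n ℝ} (hL : L.IsHermitian) (hS : S.IsHermitian) {t m : ℝ} (ht : 0 ≤ t)
    (hm : m ∈ upperBounds {μ : ℝ | ∃ f : n → ℝ, f ≠ 0 ∧ L *ᵥ f = μ • f})
    (hSsq : S * S = 1 - NormedSpace.exp ((-t) • L)) (x : n → ℝ) :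
    ∑ i, (S *ᵥ x) i ^ 2 ≤ (1 - Real.exp (-(t * m))) * ∑ i, x i ^ 2 := by
  have hx : x ⬝ᵥ x = ∑ i, x i ^ 2 := by simp only [dotProduct, sq]
  rw [hS.sum_sq_mulVec, hSsq, ← hx]
  exact hL.dotProduct_one_sub_exp_neg_smul_mulVec_le ht (hL.eigenvalues_le hm) x

section Scattering

variable {n : Type*} [Fintype n] {S : Matrix n n ℝ} {c : ℝ}

theorem nonneg_of_sum_sq_mulVec_le (hSc : ∀ x, ∑ i, (S *ᵥ x) i ^ 2 ≤ c * ∑ i, x i ^ 2)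
    {x : n → ℝ} (hx : x ≠ 0) : 0 ≤ c := by
  obtain ⟨i, hi⟩ := Function.ne_iff.mp hx
  have hpos : 0 < ∑ j, x j ^ 2 :=
    Finset.sum_pos' (fun j _ => sq_nonneg _) ⟨i, Finset.mem_univ i, sq_pos_of_ne_zero hi⟩
  exact nonneg_of_mul_nonneg_left ((Finset.sum_nonneg fun j _ => sq_nonneg _).trans (hSc x)) hpos

theorem sqrt_sum_sq_mulVec_le (hSc : ∀ x, ∑ i, (S *ᵥ x) i ^ 2 ≤ c * ∑ i, x i ^ 2)
    (x : n → ℝ) : √(∑ i, (S *ᵥ x) i ^ 2) ≤ √c * √(∑ i, x i ^ 2) := by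
  rw [← Real.sqrt_mul' _ (Finset.sum_nonneg fun i _ => sq_nonneg _)]
  exact Real.sqrt_le_sqrt (hSc x)

theorem sqrt_sum_sq_mulVec_abs_le (hSc : ∀ x, ∑ i, (S *ᵥ x) i ^ 2 ≤ c * ∑ i, x i ^ 2)
    (x : n → ℝ) : √(∑ i, (S *ᵥ fun j => |x j|) i ^ 2) ≤ √c * √(∑ i, x i ^ 2) := by
  simpa only [sq_abs] using sqrt_sum_sq_mulVec_le hSc fun j => |x j|

theorem sqrt_sum_sq_scattering_le (hSc : ∀ x, ∑ i, (S *ᵥ x) i ^ 2 ≤ c * ∑ i, x i ^ 2)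
    {g : ℕ → n → ℝ} (hg : ∀ k, g (k + 1) = S *ᵥ fun i => |g k i|) (k : ℕ) :
    √(∑ i, g (k + 1) i ^ 2) ≤ √c ^ k * √(∑ i, (S *ᵥ fun j => |g 0 j|) i ^ 2) := by
  induction k with
  | zero => rw [hg 0, pow_zero, one_mul]
  | succ k ih =>
    calc √(∑ i, g (k + 2) i ^ 2)
        ≤ √c * √(∑ i, g (k + 1) i ^ 2) := hg (k + 1) ▸ sqrt_sum_sq_mulVec_abs_le hSc _
      _ ≤ √c * (√c ^ k * √(∑ i, (S *ᵥ fun j => |g 0 j|) i ^ 2)) := by gcongr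
      _ = √c ^ (k + 1) * √(∑ i, (S *ᵥ fun j => |g 0 j|) i ^ 2) := by ring

end Scattering

theorem stmt_8_general (E : Finset (V × V)) (w a : V × V → ℝ)
    (t : ℝ) (ht : 0 < t) (lmax : ℝ)
    (hlmax : IsGreatest {μ : ℝ | ∃ f : V → ℝ, f ≠ 0 ∧
      (Lap E w a).mulVec f = μ • f} lmax)
    (S : Matrix V V ℝ) (hS : S.PosSemidef)
    (hSsq : S * S = 1 - NormedSpace.exp ((-t) • Lap E w a))
    (f : V → ℝ) (g : ℕ → V → ℝ) (hg0 : g 0 = f)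
    (hg : ∀ k, g (k + 1) = S.mulVec (fun i => |g k i|))
    (k : ℕ) (hk : 1 ≤ k) :
    Real.sqrt (∑ i, (g k i) ^ 2) ≤
      (1 - Real.exp (-(t * lmax))) ^ (((k : ℝ) - 1) / 2) *
        Real.sqrt (∑ i, (S.mulVec (fun j => |f j|) i) ^ 2) ∧
    (1 - Real.exp (-(t * lmax))) ^ (((k : ℝ) - 1) / 2) *
        Real.sqrt (∑ i, (S.mulVec (fun j => |f j|) i) ^ 2) ≤
      (1 - Real.exp (-(t * lmax))) ^ ((k : ℝ) / 2) * Real.sqrt (∑ i, (f i) ^ 2) := by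
  set c := 1 - Real.exp (-(t * lmax))
  have hSc : ∀ x, ∑ i, (S *ᵥ x) i ^ 2 ≤ c * ∑ i, x i ^ 2 :=
    sum_sq_mulVec_le_of_sq_eq_one_sub_exp (Lap_isHermitian E w a) hS.isHermitian ht.le
      hlmax.2 hSsq
  obtain ⟨x, hx, -⟩ := hlmax.1
  have hc : 0 ≤ c := nonneg_of_sum_sq_mulVec_le hSc hx
  obtain ⟨k, rfl⟩ := Nat.exists_eq_add_of_le' hk
  have hexp : ((↑(k + 1) : ℝ) - 1) / 2 = (k : ℝ) / 2 := by push_cast; ring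
  rw [hexp, Real.rpow_div_two_eq_sqrt _ hc, Real.rpow_div_two_eq_sqrt _ hc, Real.rpow_natCast,
    Real.rpow_natCast, ← hg0]
  refine ⟨sqrt_sum_sq_scattering_le hSc hg k, ?_⟩
  rw [pow_succ, mul_assoc]
  gcongr
  exact sqrt_sum_sq_mulVec_abs_le hSc (g 0)

/-- geometric decay of the scattering layers:
`‖g_k‖ ≤ (1-e^{-tλmax})^{(k-1)/2} ‖S_t|g_0|‖ ≤ (1-e^{-tλmax})^{k/2} ‖f‖`. -/
theorem stmt_8 (E : Finset (V × V)) (w a : V × V → ℝ)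
    (hconn : WeaklyConnected E) (hw : ∀ e ∈ E, 0 < w e)
    (t : ℝ) (ht : 0 < t) (lmax : ℝ)
    (hlmax : IsGreatest {μ : ℝ | ∃ f : V → ℝ, f ≠ 0 ∧
      (Lap E w a).mulVec f = μ • f} lmax)
    (S : Matrix V V ℝ) (hS : S.PosSemidef)
    (hSsq : S * S = 1 - NormedSpace.exp ((-t) • Lap E w a))
    (f : V → ℝ) (g : ℕ → V → ℝ) (hg0 : g 0 = f)
    (hg : ∀ k, g (k + 1) = S.mulVec (fun i => |g k i|))
    (k : ℕ) (hk : 1 ≤ k) :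
    Real.sqrt (∑ i, (g k i) ^ 2) ≤
      (1 - Real.exp (-(t * lmax))) ^ (((k : ℝ) - 1) / 2) *
        Real.sqrt (∑ i, (S.mulVec (fun j => |f j|) i) ^ 2) ∧
    (1 - Real.exp (-(t * lmax))) ^ (((k : ℝ) - 1) / 2) *
        Real.sqrt (∑ i, (S.mulVec (fun j => |f j|) i) ^ 2) ≤
      (1 - Real.exp (-(t * lmax))) ^ ((k : ℝ) / 2) * Real.sqrt (∑ i, (f i) ^ 2) :=
  stmt_8_general E w a t ht lmax hlmax S hS hSsq f g hg0 hg k hk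
end

section
/- With the scattering sequence g_0 = f, f_{k+1} = T_t |g_k|, g_{k+1} = S_t |g_k| as above on a finite weakly connected directed graph, one has ‖f‖² = Σ_{k=1}^∞ ‖f_k‖², and the terms ‖g_k‖² are dominated by a geometric series with ratio (1 − e^{−tλ_max}). -/
open Matrix Real MeasureTheory ProbabilityTheory

variable {V : Type*} [Fintype V] [DecidableEq V]

/-!
Write `b k = ‖g k‖² = ‖|g k|‖²`. Since `T_t` and `S_t` are symmetric with `T_t² + S_t² = I`, each
scattering step splits this energy as `b k = ‖f (k+1)‖² + b (k+1)`. Diagonalising `Δ_{w,a}`, the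
quadratic form of `T_t² = e^{-tΔ_{w,a}}` is at least `e^{-tλ_max}` times the squared norm, so
`b (k+1) ≤ (1 - e^{-tλ_max}) b k`. Hence `b k` decays geometrically and the energies `‖f (k+1)‖²`
telescope to `b 0 = ‖f‖²`.
-/

open Filter Topology

lemma le_pow_mul_of_add_succ_eq {a b : ℕ → ℝ} {c : ℝ} (hc : c ≤ 1)
    (hab : ∀ k, a k + b (k + 1) = b k) (hca : ∀ k, c * b k ≤ a k) (k : ℕ) :
    b k ≤ (1 - c) ^ k * b 0 :=
  le_geom (by linarith) k fun j _ => by linarith [hab j, hca j]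

lemma hasSum_of_add_succ_eq {a b : ℕ → ℝ} (ha : ∀ k, 0 ≤ a k)
    (hab : ∀ k, a k + b (k + 1) = b k) (hb : Tendsto b atTop (𝓝 0)) : HasSum a (b 0) := by
  rw [hasSum_iff_tendsto_nat_of_nonneg ha]
  have hpartial : ∀ n, ∑ k ∈ Finset.range n, a k = b 0 - b n := fun n => by
    rw [← Finset.sum_range_sub' b n]
    exact Finset.sum_congr rfl fun k _ => by linarith [hab k]
  simpa [hpartial] using (tendsto_const_nhds (x := b 0)).sub hb

lemma hasSum_of_add_succ_eq_of_mul_le {a b : ℕ → ℝ} {c : ℝ} (hc₀ : 0 < c) (hc₁ : c ≤ 1)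
    (hb : ∀ k, 0 ≤ b k) (hab : ∀ k, a k + b (k + 1) = b k) (hca : ∀ k, c * b k ≤ a k) :
    HasSum a (b 0) := by
  have hgeom : Tendsto (fun k => (1 - c) ^ k * b 0) atTop (𝓝 0) := by
    simpa using (tendsto_pow_atTop_nhds_zero_of_lt_one (by linarith) (by linarith)).mul_const (b 0)
  exact hasSum_of_add_succ_eq (fun k => (mul_nonneg hc₀.le (hb k)).trans (hca k)) hab
    (squeeze_zero hb (le_pow_mul_of_add_succ_eq hc₁ hab hca) hgeom)

namespace Matrix

variable {n : Type*} [Fintype n]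

lemma sum_sq_mulVec_eq_dotProduct_transpose_mul_mulVec (M : Matrix n n ℝ) (x : n → ℝ) :
    ∑ i, (M *ᵥ x) i ^ 2 = x ⬝ᵥ (Mᵀ * M) *ᵥ x := by
  rw [← mulVec_mulVec, dotProduct_mulVec, ← mulVec_transpose, transpose_transpose]
  simp only [dotProduct, sq]

lemma sum_sq_mulVec_add_sum_sq_mulVec [DecidableEq n] {T S : Matrix n n ℝ} (hT : T.IsSymm)
    (hS : S.IsSymm) (hTS : S * S = 1 - T * T) (x : n → ℝ) :
    ∑ i, (T *ᵥ x) i ^ 2 + ∑ i, (S *ᵥ x) i ^ 2 = ∑ i, x i ^ 2 := by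
  rw [sum_sq_mulVec_eq_dotProduct_transpose_mul_mulVec,
    sum_sq_mulVec_eq_dotProduct_transpose_mul_mulVec, hT.eq, hS.eq, hTS, sub_mulVec, one_mulVec,
    dotProduct_sub, add_sub_cancel]
  simp only [dotProduct, sq]

namespace IsHermitian

variable [DecidableEq n] {A : Matrix n n ℝ} (hA : A.IsHermitian)

lemma exp_smul_eq (s : ℝ) :
    NormedSpace.exp (s • A) = (hA.eigenvectorUnitary : Matrix n n ℝ) *
      diagonal (fun i => Real.exp (s * hA.eigenvalues i)) *
      star (hA.eigenvectorUnitary : Matrix n n ℝ) := by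
  set U : Matrix n n ℝ := (hA.eigenvectorUnitary : Matrix n n ℝ)
  have hinv : U⁻¹ = star U := inv_eq_left_inv (mem_unitaryGroup_iff'.mp hA.eigenvectorUnitary.2)
  have hconj : s • A = U * diagonal (fun i => s * hA.eigenvalues i) * U⁻¹ := by
    rw [hinv, show diagonal (fun i => s * hA.eigenvalues i) =
        s • diagonal (RCLike.ofReal ∘ hA.eigenvalues : n → ℝ) by rw [← diagonal_smul]; rfl,
      mul_smul_comm, smul_mul_assoc, ← Unitary.conjStarAlgAut_apply (S := ℝ),
      ← hA.spectral_theorem]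
  rw [hconj, exp_conj U _ ⟨Unitary.toUnits hA.eigenvectorUnitary, rfl⟩, exp_diagonal, hinv]
  congr 2
  funext i
  simp [Pi.exp_def, Real.exp_eq_exp_ℝ]

lemma dotProduct_exp_smul_mulVec (s : ℝ) (x : n → ℝ) :
    x ⬝ᵥ NormedSpace.exp (s • A) *ᵥ x = ∑ i, Real.exp (s * hA.eigenvalues i) *
      (star (hA.eigenvectorUnitary : Matrix n n ℝ) *ᵥ x) i ^ 2 := by
  rw [hA.exp_smul_eq, ← mulVec_mulVec, ← mulVec_mulVec, dotProduct_mulVec, ← mulVec_transpose,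
    star_eq_conjTranspose, conjTranspose_eq_transpose_of_trivial]
  simp only [dotProduct, mulVec_diagonal]
  exact Finset.sum_congr rfl fun i _ => by ring

lemma sum_sq_star_eigenvectorUnitary_mulVec (x : n → ℝ) :
    ∑ i, (star (hA.eigenvectorUnitary : Matrix n n ℝ) *ᵥ x) i ^ 2 = ∑ i, x i ^ 2 := by
  rw [sum_sq_mulVec_eq_dotProduct_transpose_mul_mulVec, star_eq_conjTranspose,
    conjTranspose_eq_transpose_of_trivial, transpose_transpose,
    ← conjTranspose_eq_transpose_of_trivial, ← star_eq_conjTranspose,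
    mem_unitaryGroup_iff.mp hA.eigenvectorUnitary.2, one_mulVec]
  simp only [dotProduct, sq]

lemma eigenvalues_le_of_isGreatest {m : ℝ}
    (hm : IsGreatest {μ : ℝ | ∃ f : n → ℝ, f ≠ 0 ∧ A *ᵥ f = μ • f} m) (i : n) :
    hA.eigenvalues i ≤ m :=
  hm.2 ⟨hA.eigenvectorBasis i,
    fun h => hA.eigenvectorBasis.orthonormal.ne_zero i (by ext j; exact congrFun h j),
    hA.mulVec_eigenvectorBasis i⟩

lemma exp_neg_mul_mul_sum_sq_le {m s : ℝ} (hm : ∀ i, hA.eigenvalues i ≤ m) (hs : 0 ≤ s)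
    (x : n → ℝ) :
    Real.exp (-(s * m)) * ∑ i, x i ^ 2 ≤ x ⬝ᵥ NormedSpace.exp ((-s) • A) *ᵥ x := by
  rw [hA.dotProduct_exp_smul_mulVec, ← hA.sum_sq_star_eigenvectorUnitary_mulVec x, Finset.mul_sum]
  gcongr with i
  nlinarith [hm i]

end IsHermitian

lemma PosSemidef.nonneg_of_isGreatest [DecidableEq n] {A : Matrix n n ℝ} (hA : A.PosSemidef)
    {m : ℝ} (hm : IsGreatest {μ : ℝ | ∃ f : n → ℝ, f ≠ 0 ∧ A *ᵥ f = μ • f} m) : 0 ≤ m := by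
  obtain ⟨f, hf, -⟩ := hm.1
  obtain ⟨i⟩ : Nonempty n := by
    by_contra h
    exact hf (funext fun i => (h ⟨i⟩).elim)
  exact (hA.eigenvalues_nonneg i).trans (hA.1.eigenvalues_le_of_isGreatest hm i)

end Matrix

lemma Lap_posSemidef (E : Finset (V × V)) {w : V × V → ℝ} (a : V × V → ℝ)
    (hw : ∀ e ∈ E, 0 ≤ w e) : (Lap E w a).PosSemidef := by
  rw [Lap, ← conjTranspose_eq_transpose_of_trivial]
  exact (posSemidef_diagonal_iff.mpr fun e : E => hw e e.2).conjTranspose_mul_mul_same _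

theorem stmt_9_general (E : Finset (V × V)) (w a : V × V → ℝ)
    (hw : ∀ e ∈ E, 0 < w e)
    (t : ℝ) (ht : 0 < t) (lmax : ℝ)
    (hlmax : IsGreatest {μ : ℝ | ∃ f : V → ℝ, f ≠ 0 ∧
      (Lap E w a).mulVec f = μ • f} lmax)
    (S : Matrix V V ℝ) (hS : S.PosSemidef)
    (hSsq : S * S = 1 - NormedSpace.exp ((-t) • Lap E w a))
    (f : V → ℝ) (g fs : ℕ → V → ℝ) (hg0 : g 0 = f)
    (hg : ∀ k, g (k + 1) = S.mulVec (fun i => |g k i|))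
    (hfs : ∀ k, fs (k + 1) =
      (NormedSpace.exp ((-(t / 2)) • Lap E w a)).mulVec (fun i => |g k i|)) :
    (∑' k : ℕ, ∑ i, (fs (k + 1) i) ^ 2) = ∑ i, (f i) ^ 2 ∧
    ∃ C : ℝ, ∀ k : ℕ, 1 ≤ k →
      (∑ i, (g k i) ^ 2) ≤ C * (1 - Real.exp (-(t * lmax))) ^ k := by
  have hL : (Lap E w a).PosSemidef := Lap_posSemidef E a fun e he => (hw e he).le
  set T := NormedSpace.exp ((-(t / 2)) • Lap E w a)
  have hT : T.IsSymm := ((isHermitian_iff_isSymm.mp hL.1).smul _).exp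
  have hTT : T * T = NormedSpace.exp ((-t) • Lap E w a) := by
    rw [← exp_add_of_commute _ _ (Commute.refl _), ← add_smul]
    ring_nf
  have hstep : ∀ k, ∑ i, fs (k + 1) i ^ 2 + ∑ i, g (k + 1) i ^ 2 = ∑ i, g k i ^ 2 := fun k => by
    rw [hfs, hg, sum_sq_mulVec_add_sum_sq_mulVec hT (isHermitian_iff_isSymm.mp hS.1) (hTT ▸ hSsq)]
    simp only [sq_abs]
  have hlow : ∀ k, Real.exp (-(t * lmax)) * ∑ i, g k i ^ 2 ≤ ∑ i, fs (k + 1) i ^ 2 := fun k => by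
    rw [hfs, sum_sq_mulVec_eq_dotProduct_transpose_mul_mulVec, hT.eq, hTT]
    simpa only [sq_abs] using hL.1.exp_neg_mul_mul_sum_sq_le
      (hL.1.eigenvalues_le_of_isGreatest hlmax) ht.le fun i => |g k i|
  have hc₁ : Real.exp (-(t * lmax)) ≤ 1 :=
    Real.exp_le_one_iff.mpr (neg_nonpos.mpr (mul_nonneg ht.le (hL.nonneg_of_isGreatest hlmax)))
  have hsum := hasSum_of_add_succ_eq_of_mul_le (b := fun k => ∑ i, g k i ^ 2) (Real.exp_pos _) hc₁
    (fun k => Finset.sum_nonneg fun i _ => sq_nonneg _) hstep hlow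
  refine ⟨hsum.tsum_eq.trans (by rw [hg0]), ∑ i, f i ^ 2, fun k _ => ?_⟩
  rw [mul_comm, ← hg0]
  exact le_pow_mul_of_add_succ_eq (b := fun k => ∑ i, g k i ^ 2) hc₁ hstep hlow k

/-- energy identity `‖f‖² = Σ_{k≥1} ‖f_k‖²` and geometric domination of the
terms `‖g_k‖²` with ratio `1 - e^{-tλmax}`. -/
theorem stmt_9 (E : Finset (V × V)) (w a : V × V → ℝ)
    (hconn : WeaklyConnected E) (hw : ∀ e ∈ E, 0 < w e)
    (t : ℝ) (ht : 0 < t) (lmax : ℝ)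
    (hlmax : IsGreatest {μ : ℝ | ∃ f : V → ℝ, f ≠ 0 ∧
      (Lap E w a).mulVec f = μ • f} lmax)
    (S : Matrix V V ℝ) (hS : S.PosSemidef)
    (hSsq : S * S = 1 - NormedSpace.exp ((-t) • Lap E w a))
    (f : V → ℝ) (g fs : ℕ → V → ℝ) (hg0 : g 0 = f)
    (hg : ∀ k, g (k + 1) = S.mulVec (fun i => |g k i|))
    (hfs : ∀ k, fs (k + 1) =
      (NormedSpace.exp ((-(t / 2)) • Lap E w a)).mulVec (fun i => |g k i|)) :
    (∑' k : ℕ, ∑ i, (fs (k + 1) i) ^ 2) = ∑ i, (f i) ^ 2 ∧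
    ∃ C : ℝ, ∀ k : ℕ, 1 ≤ k →
      (∑ i, (g k i) ^ 2) ≤ C * (1 - Real.exp (-(t * lmax))) ^ k :=
  stmt_9_general E w a hw t ht lmax hlmax S hS hSsq f g fs hg0 hg hfs
end
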